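/- Let R be an algebraic curvature tensor on ℝⁿ (n ≥ 4), i.e. a multilinear form R: ℝⁿ×ℝⁿ×ℝⁿ×ℝⁿ → ℝ satisfying R(X,Y,Z,W) = -R(Y,X,Z,W) = R(Z,W,X,Y) and the first Bianchi identity. Suppose that for some point the sectional-type pinching holds: there exist constants K_min, K_max with 0 < K_max < 4·K_min such that K_min ≤ R(X,Y,X,Y) ≤ K_max for all orthonormal pairs X,Y, and suppose Berger's inequality |R(e₁,e₂,e₃,e₄)| ≤ (2/3)(K_max − K_min) holds for all orthonormal four-frames. Then for every orthonormal four-frame {e₁,e₂,e₃,e₄} and all λ, μ ∈ [0,1]: R(e₁,e₃,e₁,e₃) + λ²R(e₁,e₄,e₁,e₄) + μ²R(e₂,e₃,e₂,e₃) + λ²μ²R(e₂,e₄,e₂,e₄) − 2λμ·R(e₁,e₂,e₃,e₄) > 0. -/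

import Mathlib

/-!
Each of the four sectional curvatures in the combination is at least `K_min`, so its curvature
part is at least `K_min (1 + λ² + μ² + λ²μ²) = K_min ((1 - λμ)² + (λ - μ)² + 4λμ)`.
Berger's inequality bounds the mixed term `2λμ R(e₁,e₂,e₃,e₄)` by `(4/3) λμ (K_max - K_min)`,
leaving at least `K_min (1 - λμ)² + (4/3) λμ (4 K_min - K_max)`, a sum of two nonnegative
terms which cannot both vanish.
-/

noncomputable section
open scoped BigOperators

def dotp {n : ℕ} (X Y : Fin n → ℝ) : ℝ := ∑ i, X i * Y i

def ON4 {n : ℕ} (e₁ e₂ e₃ e₄ : Fin n → ℝ) : Prop :=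
  dotp e₁ e₁ = 1 ∧ dotp e₂ e₂ = 1 ∧ dotp e₃ e₃ = 1 ∧ dotp e₄ e₄ = 1 ∧
  dotp e₁ e₂ = 0 ∧ dotp e₁ e₃ = 0 ∧ dotp e₁ e₄ = 0 ∧
  dotp e₂ e₃ = 0 ∧ dotp e₂ e₄ = 0 ∧ dotp e₃ e₄ = 0

theorem one_add_sq_add_sq_add_sq_mul_sq {α : Type*} [CommRing α] (a b : α) :
    1 + a ^ 2 + b ^ 2 + a ^ 2 * b ^ 2 = (1 - a * b) ^ 2 + (a - b) ^ 2 + 4 * (a * b) := by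
  ring

theorem mul_one_add_sq_add_sq_add_sq_mul_sq_le {K a b c d : ℝ}
    (ha : K ≤ a) (hb : K ≤ b) (hc : K ≤ c) (hd : K ≤ d) (lam mu : ℝ) :
    K * (1 + lam ^ 2 + mu ^ 2 + lam ^ 2 * mu ^ 2) ≤
      a + lam ^ 2 * b + mu ^ 2 * c + lam ^ 2 * mu ^ 2 * d := by
  have hb' := mul_le_mul_of_nonneg_left hb (sq_nonneg lam)
  have hc' := mul_le_mul_of_nonneg_left hc (sq_nonneg mu)
  have hd' := mul_le_mul_of_nonneg_left hd (mul_nonneg (sq_nonneg lam) (sq_nonneg mu))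
  linarith

theorem lt_mul_one_add_sq_add_sq_add_sq_mul_sq_sub {K Kmax x : ℝ}
    (hK : 0 < K) (hK4 : Kmax < 4 * K) (hx : x ≤ 2 / 3 * (Kmax - K))
    {lam mu : ℝ} (hlm : 0 ≤ lam * mu) :
    0 < K * (1 + lam ^ 2 + mu ^ 2 + lam ^ 2 * mu ^ 2) - 2 * (lam * mu) * x := by
  rw [one_add_sq_add_sq_add_sq_mul_sq]
  set t := lam * mu
  have hmixed : 2 * t * x ≤ 4 / 3 * t * (Kmax - K) := by nlinarith
  have hlower : K * (1 - t) ^ 2 + 4 / 3 * t * (4 * K - Kmax) ≤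
      K * ((1 - t) ^ 2 + (lam - mu) ^ 2 + 4 * t) - 2 * t * x := by
    nlinarith [mul_nonneg hK.le (sq_nonneg (lam - mu))]
  have hremainder : 0 < K * (1 - t) ^ 2 + 4 / 3 * t * (4 * K - Kmax) := by
    rcases hlm.eq_or_lt with ht | ht
    · simp [← ht, hK]
    · nlinarith [mul_nonneg hK.le (sq_nonneg (1 - t)), mul_pos ht (sub_pos.2 hK4)]
  linarith

theorem pinching_implies_pic_lambda_mu {n : ℕ}
    (R : MultilinearMap ℝ (fun _ : Fin 4 => (Fin n → ℝ)) ℝ)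
    (Kmin Kmax : ℝ) (hK0 : 0 < Kmax) (hK4 : Kmax < 4 * Kmin)
    (hsec : ∀ X Y : Fin n → ℝ, dotp X X = 1 → dotp Y Y = 1 → dotp X Y = 0 →
      Kmin ≤ R ![X, Y, X, Y] ∧ R ![X, Y, X, Y] ≤ Kmax)
    (hberger : ∀ e₁ e₂ e₃ e₄ : Fin n → ℝ, ON4 e₁ e₂ e₃ e₄ →
      |R ![e₁, e₂, e₃, e₄]| ≤ (2 / 3) * (Kmax - Kmin)) :
    ∀ e₁ e₂ e₃ e₄ : Fin n → ℝ, ON4 e₁ e₂ e₃ e₄ →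
      ∀ lam mu : ℝ, lam ∈ Set.Icc (0 : ℝ) 1 → mu ∈ Set.Icc (0 : ℝ) 1 →
      0 < R ![e₁, e₃, e₁, e₃] + lam ^ 2 * R ![e₁, e₄, e₁, e₄]
          + mu ^ 2 * R ![e₂, e₃, e₂, e₃]
          + lam ^ 2 * mu ^ 2 * R ![e₂, e₄, e₂, e₄]
          - 2 * lam * mu * R ![e₁, e₂, e₃, e₄] := by
  intro e₁ e₂ e₃ e₄ hON lam mu hlam hmu
  have hB := le_of_abs_le (hberger e₁ e₂ e₃ e₄ hON)
  obtain ⟨h1, h2, h3, h4, -, h13, h14, h23, h24, -⟩ := hON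
  have hcurv := mul_one_add_sq_add_sq_add_sq_mul_sq_le (hsec e₁ e₃ h1 h3 h13).1
    (hsec e₁ e₄ h1 h4 h14).1 (hsec e₂ e₃ h2 h3 h23).1 (hsec e₂ e₄ h2 h4 h24).1 lam mu
  have hpos := lt_mul_one_add_sq_add_sq_add_sq_mul_sq_sub (by linarith) hK4 hB
    (mul_nonneg hlam.1 hmu.1)
  linarith
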